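/- arXiv:2605.23173 — 2 statements merged into one kernel-verified Lean document; each statement's English description precedes it below -/
import Mathlib

section
/- Let r ∈ (0,1) and let μ be a growth rate that is weakly slower than the subexponential rate u_r(t) = exp(sgn(t)((|t|+1)^r − 1)), i.e., there is M ≥ 1 with μ(t)/μ(s) ≤ M·u_r(t)/u_r(s) for all t ≥ s. Then for every fixed t ∈ ℝ, the translated values μ_τ(t) = μ(t+τ)/μ(τ) satisfy M^{-1} ≤ liminf_{τ→±∞} μ_τ(t) and limsup_{τ→±∞} μ_τ(t) ≤ M; in particular, for each t, the family {μ_τ(t) : τ ∈ ℝ} is bounded and bounded away from 0. -/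
open Filter

def IsGrowthRate (μ : ℝ → ℝ) : Prop :=
  StrictMono μ ∧ (∀ t, 0 < μ t) ∧ μ 0 = 1 ∧
    Tendsto μ atTop atTop ∧ Tendsto μ atBot (nhds 0)

noncomputable def subexpRate (r : ℝ) (t : ℝ) : ℝ := Real.exp (Real.sign t * ((|t| + 1) ^ r - 1))

noncomputable def Faux (r x : ℝ) : ℝ := Real.sign x * ((|x| + 1) ^ r - 1)

lemma subexpRate_eq (r x : ℝ) : subexpRate r x = Real.exp (Faux r x) := rfl

lemma Faux_of_nonneg (r : ℝ) {x : ℝ} (hx : 0 ≤ x) : Faux r x = (x + 1) ^ r - 1 := by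
  rcases hx.eq_or_lt with h | h
  · simp [Faux, ← h, Real.sign_zero, Real.one_rpow]
  · rw [Faux, Real.sign_of_pos h, abs_of_pos h, one_mul]

lemma Faux_neg (r x : ℝ) : Faux r (-x) = - Faux r x := by
  simp [Faux, Real.sign_neg, abs_neg, neg_mul]

lemma rpow_diff_le (r : ℝ) (hr1 : r ≤ 1) {A B : ℝ} (hB : 1 ≤ B) (hAB : B ≤ A) :
    A ^ r - B ^ r ≤ B ^ (r - 1) * (A - B) := by
  have hB0 : (0:ℝ) < B := one_pos.trans_le hB
  have hA0 : (0:ℝ) < A := hB0.trans_le hAB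
  have hdiv : 1 ≤ A / B := (one_le_div hB0).2 hAB
  have h1 : A ^ r = B ^ r * (A / B) ^ r := by
    rw [← Real.mul_rpow hB0.le (by positivity)]
    rw [mul_div_cancel₀ _ hB0.ne']
  have h2 : (A / B) ^ r ≤ A / B := by
    calc (A / B) ^ r ≤ (A / B) ^ (1:ℝ) := Real.rpow_le_rpow_of_exponent_le hdiv hr1
    _ = A / B := Real.rpow_one _
  have h3 : B ^ (r - 1) * B = B ^ r := by
    rw [← Real.rpow_add_one hB0.ne' (r - 1)]
    congr 1
    ring
  have h4 : A ^ r ≤ B ^ (r - 1) * A := by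
    calc A ^ r = B ^ r * (A / B) ^ r := h1
    _ ≤ B ^ r * (A / B) := mul_le_mul_of_nonneg_left h2 (Real.rpow_nonneg hB0.le r)
    _ = B ^ (r - 1) * A := by rw [← h3]; field_simp
  rw [mul_sub, h3]
  linarith

lemma Faux_nonneg (r : ℝ) (hr0 : 0 ≤ r) {x : ℝ} (hx : 0 ≤ x) : 0 ≤ Faux r x := by
  rw [Faux_of_nonneg r hx]
  have := Real.one_le_rpow (show (1:ℝ) ≤ x + 1 by linarith) hr0
  linarith

lemma Faux_nonpos (r : ℝ) (hr0 : 0 ≤ r) {x : ℝ} (hx : x ≤ 0) : Faux r x ≤ 0 := by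
  have h := Faux_nonneg r hr0 (neg_nonneg.2 hx)
  rw [Faux_neg] at h
  linarith

lemma Faux_mono (r : ℝ) (hr0 : 0 ≤ r) : Monotone (Faux r) := by
  intro b a h
  rcases le_total 0 b with hb | hb
  · rw [Faux_of_nonneg r hb, Faux_of_nonneg r (hb.trans h)]
    have := Real.rpow_le_rpow (by linarith) (show b + 1 ≤ a + 1 by linarith) hr0
    linarith
  rcases le_total a 0 with ha | ha
  · have h1 : Faux r (-a) ≤ Faux r (-b) := by
      rw [Faux_of_nonneg r (by linarith : (0:ℝ) ≤ -a), Faux_of_nonneg r (by linarith : (0:ℝ) ≤ -b)]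
      have := Real.rpow_le_rpow (by linarith) (show -a + 1 ≤ -b + 1 by linarith) hr0
      linarith
    rw [Faux_neg, Faux_neg] at h1
    linarith
  · exact (Faux_nonpos r hr0 hb).trans (Faux_nonneg r hr0 ha)

lemma Faux_sub_le' (r : ℝ) (hr1 : r ≤ 1) {a b : ℝ} (hb : 0 ≤ b) (h : b ≤ a) :
    Faux r a - Faux r b ≤ (b + 1) ^ (r - 1) * (a - b) := by
  rw [Faux_of_nonneg r (hb.trans h), Faux_of_nonneg r hb]
  have h1 := rpow_diff_le r hr1 (show (1:ℝ) ≤ b + 1 by linarith) (show b + 1 ≤ a + 1 by linarith)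
  have h2 : (b + 1:ℝ) ^ (r - 1) * (a + 1 - (b + 1)) = (b + 1) ^ (r - 1) * (a - b) := by ring
  linarith

lemma Faux_le_self (r : ℝ) (hr1 : r ≤ 1) {x : ℝ} (hx : 0 ≤ x) : Faux r x ≤ x := by
  have h := Faux_sub_le' r hr1 (le_refl (0:ℝ)) hx
  have h0 : Faux r 0 = 0 := by
    rw [Faux_of_nonneg r (le_refl (0:ℝ))]
    simp [Real.one_rpow]
  have h2 : ((0:ℝ) + 1) ^ (r - 1) = 1 := by
    norm_num
  rw [h0, h2] at h
  linarith

lemma Faux_sub_le (r : ℝ) (hr0 : 0 ≤ r) (hr1 : r ≤ 1) {a b : ℝ} (h : b ≤ a) :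
    Faux r a - Faux r b ≤ a - b := by
  rcases le_total 0 b with hb | hb
  · have h1 := Faux_sub_le' r hr1 hb h
    have h2 : (b + 1:ℝ) ^ (r - 1) ≤ 1 :=
      Real.rpow_le_one_of_one_le_of_nonpos (by linarith) (by linarith)
    have h3 : (0:ℝ) ≤ a - b := by linarith
    nlinarith
  rcases le_total a 0 with ha | ha
  · have h1 := Faux_sub_le' r hr1 (show (0:ℝ) ≤ -a by linarith) (show -a ≤ -b by linarith)
    have h2 : (-a + 1:ℝ) ^ (r - 1) ≤ 1 :=
      Real.rpow_le_one_of_one_le_of_nonpos (by linarith) (by linarith)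
    have h3 : (0:ℝ) ≤ -b - -a := by linarith
    rw [Faux_neg, Faux_neg] at h1
    nlinarith
  · have h1 : Faux r a ≤ a := Faux_le_self r hr1 ha
    have h2 : Faux r (-b) ≤ -b := Faux_le_self r hr1 (by linarith)
    rw [Faux_neg] at h2
    linarith

lemma tendsto_Faux_diff_atTop (r : ℝ) (hr0 : 0 < r) (hr1 : r < 1) (t : ℝ) :
    Tendsto (fun τ => Faux r (t + τ) - Faux r τ) atTop (nhds 0) := by
  have hg : Tendsto (fun τ : ℝ => (τ - |t| + 1) ^ (r - 1) * |t|) atTop (nhds 0) := by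
    have h1 : Tendsto (fun τ : ℝ => τ - |t| + 1) atTop atTop := by
      have := tendsto_atTop_add_const_right atTop (1 - |t|) (tendsto_id (α := ℝ))
      exact this.congr (fun τ => by simp only [id_eq]; ring)
    have h2 : Tendsto (fun x : ℝ => x ^ (r - 1)) atTop (nhds 0) := by
      have h := tendsto_rpow_neg_atTop (show (0:ℝ) < 1 - r by linarith)
      rw [show -(1 - r) = r - 1 by ring] at h
      exact h
    have h3 := (h2.comp h1).mul_const |t|
    rw [zero_mul] at h3
    exact h3
  apply squeeze_zero_norm' ?_ hg
  filter_upwards [eventually_ge_atTop |t|] with τ hτ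
  have ht1 : -|t| ≤ t := neg_abs_le t
  have ht2 : t ≤ |t| := le_abs_self t
  have hτ0 : 0 ≤ τ := (abs_nonneg t).trans hτ
  have hrpow0 : (0:ℝ) ≤ (τ - |t| + 1) ^ (r - 1) := Real.rpow_nonneg (by linarith) _
  rcases le_total 0 t with ht | ht
  · have h0 : 0 ≤ Faux r (t + τ) - Faux r τ :=
      sub_nonneg.2 (Faux_mono r hr0.le (by linarith : τ ≤ t + τ))
    have h1 := Faux_sub_le' r hr1.le hτ0 (show τ ≤ t + τ by linarith)
    have h2 : (τ + 1:ℝ) ^ (r - 1) ≤ (τ - |t| + 1) ^ (r - 1) :=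
      Real.rpow_le_rpow_of_nonpos (by linarith) (by linarith) (by linarith)
    rw [Real.norm_eq_abs, abs_of_nonneg h0]
    have h4 : (τ + 1:ℝ) ^ (r - 1) * (t + τ - τ) = (τ + 1) ^ (r - 1) * t := by ring
    have h5 : (τ + 1:ℝ) ^ (r - 1) * t ≤ (τ - |t| + 1) ^ (r - 1) * t :=
      mul_le_mul_of_nonneg_right h2 ht
    have h6 : (τ - |t| + 1:ℝ) ^ (r - 1) * t ≤ (τ - |t| + 1) ^ (r - 1) * |t| :=
      mul_le_mul_of_nonneg_left ht2 hrpow0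
    linarith
  · have h0 : Faux r (t + τ) - Faux r τ ≤ 0 :=
      sub_nonpos.2 (Faux_mono r hr0.le (by linarith : t + τ ≤ τ))
    have htτ : 0 ≤ t + τ := by linarith
    have h1 := Faux_sub_le' r hr1.le htτ (show t + τ ≤ τ by linarith)
    have h2 : (t + τ + 1:ℝ) ^ (r - 1) ≤ (τ - |t| + 1) ^ (r - 1) :=
      Real.rpow_le_rpow_of_nonpos (by linarith) (by linarith) (by linarith)
    rw [Real.norm_eq_abs, abs_of_nonpos h0]
    have h5 : (t + τ + 1:ℝ) ^ (r - 1) * (τ - (t + τ)) ≤ (τ - |t| + 1) ^ (r - 1) * (-t) := by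
      rw [show τ - (t + τ) = -t by ring]
      exact mul_le_mul_of_nonneg_right h2 (by linarith)
    have h6 : (τ - |t| + 1:ℝ) ^ (r - 1) * (-t) ≤ (τ - |t| + 1) ^ (r - 1) * |t| :=
      mul_le_mul_of_nonneg_left (neg_le_abs t) hrpow0
    linarith

lemma tendsto_Faux_diff_atBot (r : ℝ) (hr0 : 0 < r) (hr1 : r < 1) (t : ℝ) :
    Tendsto (fun τ => Faux r (t + τ) - Faux r τ) atBot (nhds 0) := by
  have h : Tendsto (fun τ : ℝ => Faux r (-t + -τ) - Faux r (-τ)) atBot (nhds 0) :=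
    (tendsto_Faux_diff_atTop r hr0 hr1 (-t)).comp tendsto_neg_atBot_atTop
  have h2 := h.neg
  rw [neg_zero] at h2
  exact h2.congr (fun τ => by
    rw [show -t + -τ = -(t + τ) by ring, Faux_neg, Faux_neg]; ring)

/-- Lemma 3.5: translations of slow growth rates have bounded limits. -/
theorem slow_rate_translations_bounded
    (r : ℝ) (hr0 : 0 < r) (hr1 : r < 1)
    (μ : ℝ → ℝ) (hμ : IsGrowthRate μ) (M : ℝ) (hM : 1 ≤ M)
    (hslow : ∀ t s : ℝ, s ≤ t → μ t / μ s ≤ M * (subexpRate r t / subexpRate r s)) :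
    ∀ t : ℝ,
      (M⁻¹ ≤ Filter.liminf (fun τ => μ (t + τ) / μ τ) atTop ∧
        Filter.limsup (fun τ => μ (t + τ) / μ τ) atTop ≤ M) ∧
      (M⁻¹ ≤ Filter.liminf (fun τ => μ (t + τ) / μ τ) atBot ∧
        Filter.limsup (fun τ => μ (t + τ) / μ τ) atBot ≤ M) ∧
      (∃ c C : ℝ, 0 < c ∧ ∀ τ : ℝ, c ≤ μ (t + τ) / μ τ ∧ μ (t + τ) / μ τ ≤ C) := by
  obtain ⟨hmono, hpos, -, -, -⟩ := hμ
  have hM0 : (0:ℝ) < M := lt_of_lt_of_le one_pos hM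
  have hMinv : M⁻¹ ≤ 1 := by
    rw [inv_le_one_iff₀]; right; exact hM
  intro t
  have hud : ∀ τ : ℝ, subexpRate r (t + τ) / subexpRate r τ
      = Real.exp (Faux r (t + τ) - Faux r τ) := fun τ => by
    rw [subexpRate_eq, subexpRate_eq, ← Real.exp_sub]
  have hub : 0 ≤ t → ∀ τ : ℝ, μ (t + τ) / μ τ ≤ M * Real.exp (Faux r (t + τ) - Faux r τ) := by
    intro ht τ
    have h := hslow (t + τ) τ (by linarith)
    rwa [hud τ] at h
  have hlb : t ≤ 0 → ∀ τ : ℝ, M⁻¹ * Real.exp (Faux r (t + τ) - Faux r τ) ≤ μ (t + τ) / μ τ := by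
    intro ht τ
    have h := hslow τ (t + τ) (by linarith)
    have hu : subexpRate r τ / subexpRate r (t + τ)
        = Real.exp (-(Faux r (t + τ) - Faux r τ)) := by
      rw [subexpRate_eq, subexpRate_eq, ← Real.exp_sub]
      congr 1
      ring
    rw [hu] at h
    have hp := hpos (t + τ)
    have hq := hpos τ
    have he := Real.exp_pos (Faux r (t + τ) - Faux r τ)
    rw [div_le_iff₀ hp, Real.exp_neg] at h
    rw [le_div_iff₀ hq]
    have h2 := mul_le_mul_of_nonneg_right h he.le
    rw [show M * (Real.exp (Faux r (t + τ) - Faux r τ))⁻¹ * μ (t + τ)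
          * Real.exp (Faux r (t + τ) - Faux r τ)
        = M * μ (t + τ) * ((Real.exp (Faux r (t + τ) - Faux r τ))⁻¹
          * Real.exp (Faux r (t + τ) - Faux r τ)) by ring,
      inv_mul_cancel₀ he.ne', mul_one] at h2
    have h3 := mul_le_mul_of_nonneg_left h2 (inv_nonneg.2 hM0.le)
    rw [show M⁻¹ * (M * μ (t + τ)) = (M⁻¹ * M) * μ (t + τ) by ring,
      inv_mul_cancel₀ hM0.ne', one_mul] at h3
    have h4 : M⁻¹ * Real.exp (Faux r (t + τ) - Faux r τ) * μ τ
        = M⁻¹ * (μ τ * Real.exp (Faux r (t + τ) - Faux r τ)) := by ring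
    linarith
  have hone : 0 ≤ t → ∀ τ : ℝ, 1 ≤ μ (t + τ) / μ τ := by
    intro ht τ
    rw [le_div_iff₀ (hpos τ), one_mul]
    exact hmono.monotone (by linarith)
  have honel : t ≤ 0 → ∀ τ : ℝ, μ (t + τ) / μ τ ≤ 1 := by
    intro ht τ
    rw [div_le_one (hpos τ)]
    exact hmono.monotone (by linarith)
  have hdub : ∀ τ : ℝ, Faux r (t + τ) - Faux r τ ≤ |t| := by
    intro τ
    rcases le_total 0 t with ht | ht
    · have h1 := Faux_sub_le r hr0.le hr1.le (show τ ≤ t + τ by linarith)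
      have := le_abs_self t
      linarith
    · have h0 : Faux r (t + τ) - Faux r τ ≤ 0 :=
        sub_nonpos.2 (Faux_mono r hr0.le (by linarith : t + τ ≤ τ))
      exact h0.trans (abs_nonneg t)
  have hdlb : ∀ τ : ℝ, -|t| ≤ Faux r (t + τ) - Faux r τ := by
    intro τ
    rcases le_total 0 t with ht | ht
    · have h0 : 0 ≤ Faux r (t + τ) - Faux r τ :=
        sub_nonneg.2 (Faux_mono r hr0.le (by linarith : τ ≤ t + τ))
      linarith [abs_nonneg t]
    · have h1 := Faux_sub_le r hr0.le hr1.le (show t + τ ≤ τ by linarith)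
      have h2 : -t ≤ |t| := neg_le_abs t
      linarith
  have hgub : ∀ τ : ℝ, μ (t + τ) / μ τ ≤ M * Real.exp |t| := by
    intro τ
    rcases le_total 0 t with ht | ht
    · refine (hub ht τ).trans ?_
      have h1 := Real.exp_le_exp.2 (hdub τ)
      nlinarith [Real.exp_pos (Faux r (t + τ) - Faux r τ)]
    · refine (honel ht τ).trans ?_
      nlinarith [Real.one_le_exp (abs_nonneg t)]
  have hglb : ∀ τ : ℝ, M⁻¹ * Real.exp (-|t|) ≤ μ (t + τ) / μ τ := by
    intro τ
    rcases le_total 0 t with ht | ht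
    · refine le_trans ?_ (hone ht τ)
      have h1 : Real.exp (-|t|) ≤ 1 := by
        have := Real.exp_le_exp.2 (neg_nonpos.2 (abs_nonneg t))
        rwa [Real.exp_zero] at this
      nlinarith [Real.exp_pos (-|t|), inv_nonneg.2 hM0.le]
    · refine le_trans ?_ (hlb ht τ)
      have h1 := Real.exp_le_exp.2 (hdlb τ)
      nlinarith [inv_nonneg.2 hM0.le]
  have key : ∀ l : Filter ℝ, l.NeBot →
      Tendsto (fun τ => Faux r (t + τ) - Faux r τ) l (nhds 0) →
      M⁻¹ ≤ liminf (fun τ => μ (t + τ) / μ τ) l ∧ limsup (fun τ => μ (t + τ) / μ τ) l ≤ M := by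
    intro l hl hdl
    haveI := hl
    have h1 : Tendsto (fun τ => Real.exp (Faux r (t + τ) - Faux r τ)) l (nhds 1) := by
      have := (Real.continuous_exp.tendsto 0).comp hdl
      rwa [Real.exp_zero] at this
    have hexp : Tendsto (fun τ => M * Real.exp (Faux r (t + τ) - Faux r τ)) l (nhds M) := by
      have h2 := h1.const_mul M
      rwa [mul_one] at h2
    have hexp' : Tendsto (fun τ => M⁻¹ * Real.exp (Faux r (t + τ) - Faux r τ)) l (nhds M⁻¹) := by
      have h2 := h1.const_mul M⁻¹
      rwa [mul_one] at h2
    constructor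
    · rcases le_total 0 t with ht | ht
      · refine le_trans hMinv ?_
        exact Filter.le_liminf_of_le (isCoboundedUnder_ge_of_le l (fun τ => hgub τ))
          (Eventually.of_forall (fun τ => hone ht τ))
      · have h2 : liminf (fun τ => M⁻¹ * Real.exp (Faux r (t + τ) - Faux r τ)) l
            ≤ liminf (fun τ => μ (t + τ) / μ τ) l :=
          liminf_le_liminf (Eventually.of_forall (fun τ => hlb ht τ))
            hexp'.isBoundedUnder_ge (isCoboundedUnder_ge_of_le l (fun τ => hgub τ))
        rwa [hexp'.liminf_eq] at h2
    · rcases le_total 0 t with ht | ht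
      · have h2 : limsup (fun τ => μ (t + τ) / μ τ) l
            ≤ limsup (fun τ => M * Real.exp (Faux r (t + τ) - Faux r τ)) l :=
          limsup_le_limsup (Eventually.of_forall (fun τ => hub ht τ))
            (isCoboundedUnder_le_of_le l (fun τ => hglb τ)) hexp.isBoundedUnder_le
        rwa [hexp.limsup_eq] at h2
      · refine le_trans ?_ hM
        exact Filter.limsup_le_of_le (isCoboundedUnder_le_of_le l (fun τ => hglb τ))
          (Eventually.of_forall (fun τ => honel ht τ))
  exact ⟨key atTop atTop_neBot (tendsto_Faux_diff_atTop r hr0 hr1 t),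
    key atBot atBot_neBot (tendsto_Faux_diff_atBot r hr0 hr1 t),
    M⁻¹ * Real.exp (-|t|), M * Real.exp |t|, by positivity,
    fun τ => ⟨hglb τ, hgub τ⟩⟩
end

section
/- If μ is a slow growth rate (weakly slower than some subexponential rate u_r, r ∈ (0,1)), then there is no growth rate σ for which there exists M ≥ 1 such that σ(t)/σ(s) ≤ M·μ_τ(t)/μ_τ(s) for all t ≥ s and all τ ∈ ℝ. -/
open Filter

lemma subexpRate_of_nonpos (r : ℝ) {x : ℝ} (hx : x ≤ 0) :
    subexpRate r x = Real.exp (1 - (1 - x) ^ r) := by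
  rcases lt_or_eq_of_le hx with h | h
  · rw [subexpRate, Real.sign_of_neg h, abs_of_neg h]
    ring_nf
  · subst h
    simp [subexpRate]

/-- Corollary 3.8 (first part): for a slow growth rate μ there is no growth rate σ
weakly slower than every translate μ_τ with a uniform constant. -/
theorem no_uniform_weakly_slower_rate_for_slow
    (μ : ℝ → ℝ) (hμ : IsGrowthRate μ)
    (hslow : ∃ r : ℝ, 0 < r ∧ r < 1 ∧ ∃ M : ℝ, 1 ≤ M ∧
      ∀ t s : ℝ, s ≤ t → μ t / μ s ≤ M * (subexpRate r t / subexpRate r s)) :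
    ¬ ∃ σ : ℝ → ℝ, IsGrowthRate σ ∧ ∃ M : ℝ, 1 ≤ M ∧
      ∀ τ t s : ℝ, s ≤ t →
        σ t / σ s ≤ M * ((μ (t + τ) / μ τ) / (μ (s + τ) / μ τ)) := by
  rintro ⟨σ, ⟨hσmono, hσpos, hσ0, hσtop, -⟩, M, hM, hbound⟩
  obtain ⟨r, hr0, hr1, M', hM', hslow'⟩ := hslow
  obtain ⟨μpos⟩ : Nonempty (∀ t, 0 < μ t) := ⟨hμ.2.1⟩
  have key : ∀ t : ℝ, 1 ≤ t → σ t ≤ M * (M' * Real.exp 1) := by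
    intro t ht
    have ht0 : (0:ℝ) < t := lt_of_lt_of_le one_pos ht
    set b : ℝ := t ^ ((1:ℝ) / (1 - r)) with hb
    have hrne : (1:ℝ) - r ≠ 0 := by linarith
    have hb1 : 1 ≤ b := Real.one_le_rpow ht (one_div_nonneg.mpr (by linarith))
    have hb0 : (0:ℝ) < b := lt_of_lt_of_le one_pos hb1
    have hbpow : b ^ ((1:ℝ) - r) = t := by
      rw [hb, ← Real.rpow_mul ht0.le, one_div_mul_cancel hrne, Real.rpow_one]
    set τ : ℝ := 1 - t - b with hτ
    have htτ : t + τ ≤ 0 := by rw [hτ]; linarith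
    have hτ0 : τ ≤ 0 := by rw [hτ]; linarith
    have h1 : σ t / σ 0 ≤ M * ((μ (t + τ) / μ τ) / (μ (0 + τ) / μ τ)) :=
      hbound τ t 0 ht0.le
    rw [hσ0, div_one, zero_add, div_self (ne_of_gt (μpos τ)), div_one] at h1
    have h2 : μ (t + τ) / μ τ ≤ M' * (subexpRate r (t + τ) / subexpRate r τ) :=
      hslow' (t + τ) τ (by linarith)
    -- compute the subexp ratio
    have hsub : subexpRate r (t + τ) / subexpRate r τ = Real.exp ((b + t) ^ r - b ^ r) := by
      rw [subexpRate_of_nonpos r htτ, subexpRate_of_nonpos r hτ0, ← Real.exp_sub]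
      congr 1
      have e1 : 1 - (t + τ) = b := by rw [hτ]; ring
      have e2 : 1 - τ = b + t := by rw [hτ]; ring
      rw [e1, e2]; ring
    -- Bernoulli bound: (b+t)^r ≤ b^r + r
    have hbern : (b + t) ^ r ≤ b ^ r + r := by
      have h3 : b + t = b * (1 + t / b) := by field_simp
      have h4 : (1 + t / b) ^ r ≤ 1 + r * (t / b) :=
        rpow_one_add_le_one_add_mul_self (by have := div_nonneg ht0.le hb0.le; linarith) hr0.le hr1.le
      calc (b + t) ^ r = b ^ r * (1 + t / b) ^ r := by
            rw [h3, Real.mul_rpow hb0.le (by positivity)]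
        _ ≤ b ^ r * (1 + r * (t / b)) := by
            apply mul_le_mul_of_nonneg_left h4 (Real.rpow_nonneg hb0.le r)
        _ = b ^ r + r * (b ^ (r - 1) * t) := by
            rw [Real.rpow_sub_one hb0.ne' r]; ring
        _ = b ^ r + r := by
            rw [show r - 1 = -(1 - r) by ring, Real.rpow_neg hb0.le, hbpow,
              inv_mul_cancel₀ (ne_of_gt ht0), mul_one]
    have hexp : Real.exp ((b + t) ^ r - b ^ r) ≤ Real.exp 1 :=
      Real.exp_le_exp.mpr (by linarith)
    calc σ t ≤ M * (μ (t + τ) / μ τ) := h1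
      _ ≤ M * (M' * (subexpRate r (t + τ) / subexpRate r τ)) := by
          apply mul_le_mul_of_nonneg_left h2 (by linarith)
      _ = M * (M' * Real.exp ((b + t) ^ r - b ^ r)) := by rw [hsub]
      _ ≤ M * (M' * Real.exp 1) := by
          apply mul_le_mul_of_nonneg_left _ (by linarith)
          exact mul_le_mul_of_nonneg_left hexp (by linarith)
  obtain ⟨t, hgt, ht1⟩ :=
    ((hσtop.eventually_gt_atTop (M * (M' * Real.exp 1))).and (eventually_ge_atTop 1)).exists
  exact absurd (key t ht1) (not_le.mpr hgt)
end
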